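/- arXiv:1802.00526 — 2 statements merged into one kernel-verified Lean document; each statement's English description precedes it below -/
import Mathlib

section
/- Let V be a finite type of users and let coupons be identified with their real values. Let p : V → ℝ → ℝ satisfy 0 ≤ p v d ≤ 1 for all v, d and be nondecreasing in d (d ≤ d' implies p v d ≤ p v d'). Let q : Finset V → ℝ be monotone (U ⊆ W implies q(U) ≤ q(W)) and submodular. For a coupon allocation S : Finset (V × ℝ), define the activation probability ρ_S(v) = p v (max of {d : (v,d) ∈ S}) if some pair (v,d) lies in S and ρ_S(v) = 0 otherwise, and for U : Finset V define Pr(U;S) = (∏_{u ∈ U} ρ_S(u)) · (∏_{v ∉ U} (1 − ρ_S(v))). Then the expected-cascade function g(S) = Σ_{U ⊆ V} Pr(U;S) · q(U) is monotone and submodular as a function of S : Finset (V × ℝ). -/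
open Finset

/-- Activation probability of user `v` under allocation `S`: `p v` applied to the
largest coupon value offered to `v` in `S`, or `0` if `v` receives no coupon. -/
noncomputable def rho {V : Type*} [Fintype V] [DecidableEq V]
    (p : V → ℝ → ℝ) (S : Finset (V × ℝ)) (v : V) : ℝ :=
  if h : ((S.filter (fun e => e.1 = v)).image Prod.snd).Nonempty then
    p v (((S.filter (fun e => e.1 = v)).image Prod.snd).max' h)
  else 0

/-- Probability that exactly the set `U` of users becomes the seed set under
allocation `S`, users being activated independently. -/
noncomputable def prSeed {V : Type*} [Fintype V] [DecidableEq V]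
    (p : V → ℝ → ℝ) (U : Finset V) (S : Finset (V × ℝ)) : ℝ :=
  (∏ u ∈ U, rho p S u) * ∏ v ∈ Uᶜ, (1 - rho p S v)

/-- The expected cascade of allocation `S`. -/
noncomputable def expCascade {V : Type*} [Fintype V] [DecidableEq V]
    (p : V → ℝ → ℝ) (q : Finset V → ℝ) (S : Finset (V × ℝ)) : ℝ :=
  ∑ U : Finset V, prSeed p U S * q U

/-!
Write `F r = ∑ U, (∏ u ∈ U, r u) (∏ v ∉ U, (1 - r v)) q U` for the multilinear extension of `q`, the
expectation of `q` on a random set containing each `v` independently with probability `r v`; then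
`g S = F (ρ_S)`. Splitting on whether `w` is in the random set shows that `F` is affine in `r w`, with
slope the expected marginal gain `q (R ∪ {w}) - q R` over a random `R ⊆ V \ {w}`. By induction on the
coordinates, `F` is monotone on `[0,1]^V` when `q` is, so the slope is nonnegative, and (applied to
the marginal gains, which are antitone by submodularity) the slope decreases as `r` increases.
A coupon `(w, d)` only raises `ρ(w)`, to `max (ρ w) (p w d)`; the raise shrinks as `ρ w` grows and
`ρ_X ≤ ρ_Y` for `X ⊆ Y`, whence diminishing returns.
-/

section MultilinearExt

variable {V : Type*} [DecidableEq V]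

noncomputable def multilinearExt (s : Finset V) (f : Finset V → ℝ) (r : V → ℝ) : ℝ :=
  ∑ U ∈ s.powerset, (∏ u ∈ U, r u) * (∏ v ∈ s \ U, (1 - r v)) * f U

variable {s : Finset V} {f g : Finset V → ℝ} {r r' : V → ℝ}

theorem multilinearExt_sub (s : Finset V) (f g : Finset V → ℝ) (r : V → ℝ) :
    multilinearExt s (fun U => f U - g U) r = multilinearExt s f r - multilinearExt s g r := by
  simp only [multilinearExt, mul_sub, sum_sub_distrib]

theorem multilinearExt_neg (s : Finset V) (f : Finset V → ℝ) (r : V → ℝ) :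
    multilinearExt s (fun U => -f U) r = -multilinearExt s f r := by
  simp only [multilinearExt, mul_neg, sum_neg_distrib]

theorem multilinearExt_congr (h : ∀ v ∈ s, r v = r' v) :
    multilinearExt s f r = multilinearExt s f r' := by
  refine sum_congr rfl fun U hU => ?_
  have hUs := mem_powerset.1 hU
  rw [prod_congr rfl fun u hu => h u (hUs hu),
    prod_congr rfl fun v hv => congrArg (1 - ·) (h v (mem_sdiff.1 hv).1)]

theorem multilinearExt_insert {a : V} (ha : a ∉ s) (f : Finset V → ℝ) (r : V → ℝ) :
    multilinearExt (insert a s) f r =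
      (1 - r a) * multilinearExt s f r + r a * multilinearExt s (fun U => f (insert a U)) r := by
  rw [multilinearExt, sum_powerset_insert ha, multilinearExt, multilinearExt, mul_sum, mul_sum,
    ← sum_add_distrib, ← sum_add_distrib]
  refine sum_congr rfl fun U hU => ?_
  have haU : a ∉ U := fun h => ha (mem_powerset.1 hU h)
  rw [insert_sdiff_of_notMem _ haU, prod_insert fun h => ha (mem_sdiff.1 h).1,
    insert_sdiff_insert, sdiff_insert_of_notMem ha, prod_insert haU]
  ring

theorem multilinearExt_insert_eq_add {a : V} (ha : a ∉ s) (f : Finset V → ℝ) (r : V → ℝ) :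
    multilinearExt (insert a s) f r =
      multilinearExt s f r + r a * multilinearExt s (fun U => f (insert a U) - f U) r := by
  rw [multilinearExt_insert ha, multilinearExt_sub]
  ring

theorem multilinearExt_sub_of_eq_of_ne {a : V} (ha : a ∈ s) (h : ∀ v, v ≠ a → r v = r' v) :
    multilinearExt s f r' - multilinearExt s f r =
      (r' a - r a) * multilinearExt (s.erase a) (fun U => f (insert a U) - f U) r := by
  have hr : ∀ g, multilinearExt (s.erase a) g r' = multilinearExt (s.erase a) g r :=
    fun g => (multilinearExt_congr fun v hv => h v (ne_of_mem_erase hv)).symm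
  rw [← insert_erase ha, multilinearExt_insert_eq_add (notMem_erase a s),
    multilinearExt_insert_eq_add (notMem_erase a s), hr, hr, erase_insert_eq_erase, erase_idem]
  ring

theorem multilinearExt_nonneg (hf : ∀ U ⊆ s, 0 ≤ f U) (hr₀ : 0 ≤ r) (hr₁ : r ≤ 1) :
    0 ≤ multilinearExt s f r :=
  sum_nonneg fun U hU => mul_nonneg (mul_nonneg (prod_nonneg fun u _ => hr₀ u)
    (prod_nonneg fun v _ => sub_nonneg.2 (hr₁ v))) (hf U (mem_powerset.1 hU))

theorem multilinearExt_le_multilinearExt (hfg : ∀ U ⊆ s, f U ≤ g U) (hr₀ : 0 ≤ r) (hr₁ : r ≤ 1) :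
    multilinearExt s f r ≤ multilinearExt s g r := by
  have := multilinearExt_nonneg (f := fun U => g U - f U) (fun U hU => sub_nonneg.2 (hfg U hU))
    hr₀ hr₁
  rwa [multilinearExt_sub, sub_nonneg] at this

theorem multilinearExt_mono (hf : MonotoneOn f (Set.Iic s)) (hr₀ : 0 ≤ r) (hrr' : r ≤ r')
    (hr'₁ : r' ≤ 1) : multilinearExt s f r ≤ multilinearExt s f r' := by
  induction s using Finset.induction_on generalizing f with
  | empty => simp [multilinearExt]
  | @insert a s ha ih =>
    rw [multilinearExt_insert ha, multilinearExt_insert ha]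
    set A := multilinearExt s f
    set B := multilinearExt s fun U => f (insert a U)
    have hA : A r ≤ A r' := ih (hf.mono (Set.Iic_subset_Iic.2 (subset_insert a s)))
    have hB : B r ≤ B r' := ih fun U hU W hW hUW =>
      hf (insert_subset_insert a hU) (insert_subset_insert a hW) (insert_subset_insert a hUW)
    have hAB : A r' ≤ B r' := multilinearExt_le_multilinearExt
      (fun U hU => hf (hU.trans (subset_insert a s)) (insert_subset_insert a hU) (subset_insert a U))
      (hr₀.trans hrr') hr'₁
    have hra : 0 ≤ 1 - r a := sub_nonneg.2 ((hrr' a).trans (hr'₁ a))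
    calc (1 - r a) * A r + r a * B r ≤ (1 - r a) * A r' + r a * B r' := by
          have := hr₀ a; gcongr
      _ = A r' + r a * (B r' - A r') := by ring
      _ ≤ A r' + r' a * (B r' - A r') := by
          have := sub_nonneg.2 hAB
          gcongr
          exact hrr' a
      _ = (1 - r' a) * A r' + r' a * B r' := by ring

theorem multilinearExt_anti (hf : AntitoneOn f (Set.Iic s)) (hr₀ : 0 ≤ r) (hrr' : r ≤ r')
    (hr'₁ : r' ≤ 1) : multilinearExt s f r' ≤ multilinearExt s f r := by
  have := multilinearExt_mono hf.neg hr₀ hrr' hr'₁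
  rwa [multilinearExt_neg, multilinearExt_neg, neg_le_neg_iff] at this

end MultilinearExt

section CouponModel

variable {V : Type*} [Fintype V] [DecidableEq V] {p : V → ℝ → ℝ}

theorem rho_nonneg (hp0 : ∀ v d, 0 ≤ p v d) (S : Finset (V × ℝ)) : 0 ≤ rho p S := by
  intro v
  unfold rho
  split
  exacts [hp0 _ _, le_rfl]

theorem rho_le_one (hp1 : ∀ v d, p v d ≤ 1) (S : Finset (V × ℝ)) : rho p S ≤ 1 := by
  intro v
  unfold rho
  split
  exacts [hp1 _ _, zero_le_one]

theorem rho_mono (hp0 : ∀ v d, 0 ≤ p v d) (hpmono : ∀ v, ∀ d d' : ℝ, d ≤ d' → p v d ≤ p v d')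
    {S T : Finset (V × ℝ)} (hST : S ⊆ T) : rho p S ≤ rho p T := by
  intro v
  have hsub : (S.filter (fun e => e.1 = v)).image Prod.snd ⊆
      (T.filter (fun e => e.1 = v)).image Prod.snd :=
    image_subset_image (filter_subset_filter _ hST)
  unfold rho
  split
  · next hS => rw [dif_pos (hS.mono hsub)]; exact hpmono v _ _ (max'_subset hS hsub)
  · split
    exacts [hp0 _ _, le_rfl]

theorem rho_insert_of_ne (X : Finset (V × ℝ)) {v w : V} (d : ℝ) (hvw : v ≠ w) :
    rho p (insert (w, d) X) v = rho p X v := by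
  simp only [rho, filter_insert, if_neg (Ne.symm hvw)]

theorem rho_insert_self (hp0 : ∀ v d, 0 ≤ p v d)
    (hpmono : ∀ v, ∀ d d' : ℝ, d ≤ d' → p v d ≤ p v d') (X : Finset (V × ℝ)) (w : V) (d : ℝ) :
    rho p (insert (w, d) X) w = max (rho p X w) (p w d) := by
  simp only [rho, filter_insert, if_pos, image_insert, dif_pos (insert_nonempty _ _)]
  split
  · next hne => rw [max'_insert d _ hne, Monotone.map_max (hpmono w), max_comm]
  · next hne =>
    simp only [not_nonempty_iff_eq_empty.1 hne, insert_empty, max'_singleton,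
      max_eq_right (hp0 w d)]

theorem expCascade_eq_multilinearExt (q : Finset V → ℝ) (S : Finset (V × ℝ)) :
    expCascade p q S = multilinearExt univ q (rho p S) := by
  simp only [expCascade, prSeed, multilinearExt, powerset_univ, ← compl_eq_univ_sdiff]

end CouponModel

theorem max_sub_self_antitone {α : Type*} [AddCommGroup α] [LinearOrder α] [IsOrderedAddMonoid α]
    {a b : α} (c : α) (hab : a ≤ b) : max b c - b ≤ max a c - a := by
  rw [← max_sub_sub_right, ← max_sub_sub_right, sub_self, sub_self]
  gcongr

theorem expCascade_monotone_and_submodular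
    {V : Type*} [Fintype V] [DecidableEq V]
    (p : V → ℝ → ℝ)
    (hp0 : ∀ v d, 0 ≤ p v d) (hp1 : ∀ v d, p v d ≤ 1)
    (hpmono : ∀ v, ∀ d d' : ℝ, d ≤ d' → p v d ≤ p v d')
    (q : Finset V → ℝ)
    (hqmono : ∀ U W : Finset V, U ⊆ W → q U ≤ q W)
    (hqsub : ∀ X Y : Finset V, X ⊆ Y → ∀ x ∉ Y,
      q (insert x X) - q X ≥ q (insert x Y) - q Y) :
    (∀ S T : Finset (V × ℝ), S ⊆ T → expCascade p q S ≤ expCascade p q T) ∧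
    (∀ X Y : Finset (V × ℝ), X ⊆ Y → ∀ e ∉ Y,
      expCascade p q (insert e X) - expCascade p q X ≥
        expCascade p q (insert e Y) - expCascade p q Y) := by
  simp only [expCascade_eq_multilinearExt]
  refine ⟨fun S T hST => multilinearExt_mono (fun U _ W _ h => hqmono U W h)
    (rho_nonneg hp0 S) (rho_mono hp0 hpmono hST) (rho_le_one hp1 T), ?_⟩
  rintro X Y hXY ⟨w, d⟩ -
  have hgain : ∀ Z : Finset (V × ℝ),
      multilinearExt univ q (rho p (insert (w, d) Z)) - multilinearExt univ q (rho p Z) =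
        (max (rho p Z w) (p w d) - rho p Z w) *
          multilinearExt (univ.erase w) (fun U => q (insert w U) - q U) (rho p Z) := fun Z => by
    rw [multilinearExt_sub_of_eq_of_ne (mem_univ w) fun v hv => (rho_insert_of_ne Z d hv).symm,
      rho_insert_self hp0 hpmono]
  have hmarg_nonneg := multilinearExt_nonneg (s := univ.erase w)
    (fun U _ => sub_nonneg.2 (hqmono U _ (subset_insert w U))) (rho_nonneg hp0 Y) (rho_le_one hp1 Y)
  have hmarg_anti := multilinearExt_anti (s := univ.erase w)
    (fun U _ W hW hUW => hqsub U W hUW w fun hw => notMem_erase w univ (hW hw))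
    (rho_nonneg hp0 X) (rho_mono hp0 hpmono hXY) (rho_le_one hp1 Y)
  rw [ge_iff_le, hgain, hgain]
  exact mul_le_mul (max_sub_self_antitone _ (rho_mono hp0 hpmono hXY w)) hmarg_anti hmarg_nonneg
    (sub_nonneg.2 (le_max_left _ _))
end

section
/- Let V and D be finite types, val : D → ℝ with val d ≥ 0, and p : V → D → ℝ with 0 ≤ p v d ≤ 1. Let f : Finset (V × D) → ℝ, let B ∈ ℝ, and let θ : Finset (V × D) → ℝ be a coupon allocation policy satisfying: θ_S ≥ 0 for all S; Σ_S θ_S = 1; whenever θ_S > 0 every user receives at most one coupon in S (for each v, at most one d with (v,d) ∈ S); and Σ_S θ_S · (Σ_{(v,d) ∈ S} p v d · val d) ≤ B. Define y : V × D → ℝ by y(v,d) = Σ_{S ∋ (v,d)} θ_S. Then: (i) for every v ∈ V, Σ_{d ∈ D} y(v,d) ≤ 1; (ii) Σ_{(v,d) ∈ V × D} y(v,d) · p v d · val d ≤ B; (iii) 0 ≤ y(v,d) ≤ 1 for every (v,d); and (iv) f⁺(y) ≥ Σ_S θ_S · f(S), where f⁺ is the concave extension of f. -/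
open Finset

/-- The concave extension `f⁺` of a set function `f` on a finite ground type. -/
noncomputable def concaveExt {E : Type*} [Fintype E] [DecidableEq E]
    (f : Finset E → ℝ) (y : E → ℝ) : ℝ :=
  sSup {r : ℝ | ∃ α : Finset E → ℝ,
    (∀ S, 0 ≤ α S) ∧
    (∑ S : Finset E, α S) ≤ 1 ∧
    (∀ e : E, (∑ S ∈ Finset.univ.filter (fun S : Finset E => e ∈ S), α S) ≤ y e) ∧
    r = ∑ S : Finset E, α S * f S}

theorem policy_marginals_feasible_and_concaveExt_dominates
    {V D : Type*} [Fintype V] [Fintype D] [DecidableEq V] [DecidableEq D]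
    (val : D → ℝ) (hval : ∀ d, 0 ≤ val d)
    (p : V → D → ℝ) (hp0 : ∀ v d, 0 ≤ p v d) (hp1 : ∀ v d, p v d ≤ 1)
    (f : Finset (V × D) → ℝ) (B : ℝ)
    (θ : Finset (V × D) → ℝ)
    (hθ0 : ∀ S, 0 ≤ θ S)
    (hθsum : (∑ S : Finset (V × D), θ S) = 1)
    (hatt : ∀ S : Finset (V × D), 0 < θ S →
      ∀ v : V, (S.filter (fun e => e.1 = v)).card ≤ 1)
    (hbudget : (∑ S : Finset (V × D), θ S * ∑ e ∈ S, p e.1 e.2 * val e.2) ≤ B)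
    (y : V × D → ℝ)
    (hy : ∀ e : V × D,
      y e = ∑ S ∈ Finset.univ.filter (fun S : Finset (V × D) => e ∈ S), θ S) :
    (∀ v : V, (∑ d : D, y (v, d)) ≤ 1) ∧
    ((∑ e : V × D, y e * p e.1 e.2 * val e.2) ≤ B) ∧
    (∀ e : V × D, 0 ≤ y e ∧ y e ≤ 1) ∧
    concaveExt f y ≥ ∑ S : Finset (V × D), θ S * f S := by
  refine ⟨?_, ?_, ?_, ?_⟩
  · intro v
    have hcard : ∀ S : Finset (V × D),
        (univ.filter (fun d : D => (v, d) ∈ S)).card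
          = (S.filter (fun e => e.1 = v)).card := by
      intro S
      apply Finset.card_bij (fun d _ => (v, d))
      · intro d hd
        simp only [mem_filter, mem_univ, true_and] at hd ⊢
        exact ⟨hd, trivial⟩
      · intro a _ b _ h
        simpa using h
      · intro e he
        simp only [mem_filter] at he
        have hee : (v, e.2) = e := by rw [← he.2]
        exact ⟨e.2, by simp [hee, he.1], hee⟩
    have key : (∑ d : D, y (v, d))
        = ∑ S : Finset (V × D), θ S * ((S.filter (fun e => e.1 = v)).card : ℝ) := by
      simp_rw [hy, Finset.sum_filter]
      rw [Finset.sum_comm]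
      refine Finset.sum_congr rfl fun S _ => ?_
      rw [← Finset.sum_filter, Finset.sum_const, nsmul_eq_mul, ← hcard, mul_comm]
    rw [key, ← hθsum]
    refine Finset.sum_le_sum fun S _ => ?_
    rcases lt_or_eq_of_le (hθ0 S) with h | h
    · calc θ S * ((S.filter (fun e => e.1 = v)).card : ℝ)
          ≤ θ S * 1 := by
            apply mul_le_mul_of_nonneg_left _ (le_of_lt h)
            exact_mod_cast hatt S h v
        _ = θ S := mul_one _
    · rw [← h]; simp
  · refine le_trans ?_ hbudget
    have key : (∑ e : V × D, y e * p e.1 e.2 * val e.2)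
        = ∑ S : Finset (V × D), θ S * ∑ e ∈ S, p e.1 e.2 * val e.2 := by
      simp_rw [hy, Finset.sum_filter, Finset.sum_mul, Finset.mul_sum]
      rw [Finset.sum_comm]
      refine Finset.sum_congr rfl fun S _ => ?_
      rw [← Finset.sum_filter_of_ne (p := fun e => e ∈ S)]
      · rw [Finset.filter_mem_eq_inter, Finset.univ_inter]
        exact Finset.sum_congr rfl fun e he => by simp only [he, if_true]; ring
      · intro e _ h
        by_contra hc
        simp [hc] at h
    exact le_of_eq key
  · intro e
    constructor
    · rw [hy]
      exact Finset.sum_nonneg fun S _ => hθ0 S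
    · rw [hy, ← hθsum]
      exact Finset.sum_le_sum_of_subset_of_nonneg (Finset.filter_subset _ _)
        (fun S _ _ => hθ0 S)
  · have hbdd : BddAbove {r : ℝ | ∃ α : Finset (V × D) → ℝ,
        (∀ S, 0 ≤ α S) ∧
        (∑ S : Finset (V × D), α S) ≤ 1 ∧
        (∀ e : V × D, (∑ S ∈ Finset.univ.filter
            (fun S : Finset (V × D) => e ∈ S), α S) ≤ y e) ∧
        r = ∑ S : Finset (V × D), α S * f S} := by
      refine ⟨∑ S : Finset (V × D), |f S|, ?_⟩
      rintro r ⟨α, hα0, hα1, _, rfl⟩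
      refine Finset.sum_le_sum fun S _ => ?_
      have hαS1 : α S ≤ 1 :=
        le_trans (Finset.single_le_sum (fun T _ => hα0 T) (Finset.mem_univ S)) hα1
      calc α S * f S ≤ α S * |f S| := by
            exact mul_le_mul_of_nonneg_left (le_abs_self _) (hα0 S)
        _ ≤ 1 * |f S| := mul_le_mul_of_nonneg_right hαS1 (abs_nonneg _)
        _ = |f S| := one_mul _
    refine le_csSup hbdd ?_
    exact ⟨θ, hθ0, le_of_eq hθsum, fun e => le_of_eq (hy e).symm, rfl⟩
end
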